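/- Let p be a prime, ω ∈ ℂ a primitive p-th root of unity, A an m×n matrix over ℤ/p and b ∈ (ℤ/p)^m. There exists a unital *-algebra homomorphism φ : ℂΓ(A,b) → 𝒜(syncLCS(A,b)) such that φ(J) = ω·1 and, for each j ∈ {1,…,n} and any i with j ∈ V_i, φ(g_j) = ∑_{x∈S_i(A,b)} ω^{x_j} a_{i,x}. Consequently φ descends to a unital *-homomorphism ℂΓ(A,b)/⟨J − ω·1⟩ → 𝒜(syncLCS(A,b)). -/

import Mathlib

set_option maxHeartbeats 1000000
noncomputable section

/-! ### The conjugate-linear star structure on a monoid algebra `ℂ[M]`,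
where `M` is a monoid with an (anti-multiplicative) star operation.
For a group `G` (with `star = ⁻¹`, see below) this is the usual star structure
`(λ·g)* = conj(λ)·g⁻¹` on the group `*`-algebra `ℂG`. -/

section MonoidAlgebraStar

variable {M : Type*} [Monoid M] [StarMul M]

/-- the star operation on `ℂ[M]`: `(λ·m)* = conj(λ)·(star m)` -/
noncomputable def mstar (f : MonoidAlgebra ℂ M) : MonoidAlgebra ℂ M :=
  Finsupp.equivMapDomain ⟨star, star, star_involutive, star_involutive⟩
    (Finsupp.mapRange (starRingEnd ℂ) (map_zero _) f.coeff) |> MonoidAlgebra.ofCoeff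

lemma mstar_apply (f : MonoidAlgebra ℂ M) (x : M) :
    (mstar f).coeff x = starRingEnd ℂ (f.coeff (star x)) := rfl

lemma mstar_single (a : M) (c : ℂ) :
    mstar (MonoidAlgebra.single a c) = MonoidAlgebra.single (star a) (starRingEnd ℂ c) := by
  classical
  ext x
  rw [mstar_apply, MonoidAlgebra.coeff_single, MonoidAlgebra.coeff_single]
  simp only [Finsupp.single_apply]
  by_cases h : a = star x
  · rw [if_pos h, if_pos (by rw [h, star_star])]
  · rw [if_neg h, if_neg (fun h2 => h (by rw [← h2, star_star])), map_zero]

lemma mstar_add (f g : MonoidAlgebra ℂ M) : mstar (f + g) = mstar f + mstar g := by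
  ext x
  exact map_add (starRingEnd ℂ) (f.coeff (star x)) (g.coeff (star x))

lemma mstar_zero : mstar (0 : MonoidAlgebra ℂ M) = 0 := by
  ext x
  exact map_zero (starRingEnd ℂ)

lemma mstar_mul (f g : MonoidAlgebra ℂ M) : mstar (f * g) = mstar g * mstar f := by
  induction f using MonoidAlgebra.induction_linear with
  | zero =>
      exact (congrArg mstar (zero_mul g)).trans (mstar_zero.trans
        ((mul_zero (mstar g)).symm.trans (congrArg _ mstar_zero.symm)))
  | add f1 f2 h1 h2 =>
      refine Eq.trans (congrArg mstar (@add_mul (MonoidAlgebra ℂ M) _ _ _ f1 f2 g)) ?_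
      rw [mstar_add, h1, h2, ← mul_add]
      exact congrArg (mstar g * ·) (mstar_add f1 f2).symm
  | single a c =>
    induction g using MonoidAlgebra.induction_linear with
    | zero =>
        exact (congrArg mstar (mul_zero _)).trans (mstar_zero.trans
          ((zero_mul _).symm.trans (congrArg (· * _) mstar_zero.symm)))
    | add g1 g2 h1 h2 =>
        refine Eq.trans (congrArg mstar (@mul_add (MonoidAlgebra ℂ M) _ _ _ _ g1 g2)) ?_
        rw [mstar_add, h1, h2, ← add_mul]
        exact congrArg (· * mstar (MonoidAlgebra.single a c)) (mstar_add g1 g2).symm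
    | single b d =>
      show mstar ((MonoidAlgebra.single a c) * (MonoidAlgebra.single b d)) =
        mstar (MonoidAlgebra.single b d) * mstar (MonoidAlgebra.single a c)
      rw [MonoidAlgebra.single_mul_single, mstar_single, mstar_single, mstar_single,
        MonoidAlgebra.single_mul_single, star_mul, map_mul, mul_comm (starRingEnd ℂ d)]

/-- the `*`-ring structure of `ℂ[M]` -/
noncomputable instance instMAStar : StarRing (MonoidAlgebra ℂ M) where
  star := mstar
  star_involutive f := by
    ext x
    calc (mstar (mstar f)).coeff x = starRingEnd ℂ (starRingEnd ℂ (f.coeff (star (star x)))) := rfl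
      _ = f.coeff (star (star x)) := Complex.conj_conj _
      _ = f.coeff x := congrArg (fun y => f.coeff y) (star_star x)
  star_mul := mstar_mul
  star_add := mstar_add

lemma star_of' (a : M) :
    star (MonoidAlgebra.of ℂ M a) = MonoidAlgebra.of ℂ M (star a) := by
  show mstar _ = _
  rw [show (MonoidAlgebra.of ℂ M a : MonoidAlgebra ℂ M) = MonoidAlgebra.single a 1 from rfl,
    mstar_single, map_one]
  rfl

end MonoidAlgebraStar

/-- On a group, `star g = g⁻¹`; together with the above this makes `ℂG` a group `*`-algebra
with `(λ·g)* = conj(λ)·g⁻¹`. -/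
instance groupStar {G : Type*} [Group G] : StarMul G where
  star := (·⁻¹)
  star_involutive := inv_inv
  star_mul := mul_inv_rev

lemma star_grp {G : Type*} [Group G] (g : G) : star g = g⁻¹ := rfl

section LinearSystem

variable {p m n : ℕ}

/-- `V_i`, the support of the `i`-th row of `A` -/
def Vset (A : Matrix (Fin m) (Fin n) (ZMod p)) (i : Fin m) : Finset (Fin n) :=
  Finset.univ.filter fun j => A i j ≠ 0

/-- `S_i(A,b)`: solutions of the `i`-th equation supported inside `V_i` -/
def Ssol [NeZero p] (A : Matrix (Fin m) (Fin n) (ZMod p)) (b : Fin m → ZMod p) (i : Fin m) :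
    Finset (Fin n → ZMod p) :=
  Finset.univ.filter fun x => (∑ j, A i j * x j) = b i ∧ ∀ j, x j ≠ 0 → j ∈ Vset A i

/-- `(x,y)` are incompatible solutions for rows `(i,k)` -/
def Incompat (A : Matrix (Fin m) (Fin n) (ZMod p)) (i k : Fin m)
    (x y : Fin n → ZMod p) : Prop :=
  ∃ j ∈ Vset A i ∩ Vset A k, x j ≠ y j

lemma Incompat.symm {A : Matrix (Fin m) (Fin n) (ZMod p)} {i k : Fin m}
    {x y : Fin n → ZMod p} (h : Incompat A i k x y) : Incompat A k i y x := by
  obtain ⟨j, hj, hne⟩ := h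
  exact ⟨j, by simpa [Finset.mem_inter, and_comm] using hj, hne.symm⟩

end LinearSystem

section GameAlgebra

variable {p m n : ℕ}

/-- the index set of the generators `a_{i,x}` of the game algebra: pairs `(i, x)` with
`x ∈ S_i(A,b)` -/
abbrev SyncGen [NeZero p] (A : Matrix (Fin m) (Fin n) (ZMod p)) (b : Fin m → ZMod p) : Type _ :=
  Σ i : Fin m, {x : Fin n → ZMod p // x ∈ Ssol A b i}

/-- the free unital complex `*`-algebra on a set `X` of self-adjoint generators -/
abbrev FreeStarAlg (X : Type*) := MonoidAlgebra ℂ (FreeMonoid X)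

/-- a generator of the free `*`-algebra -/
noncomputable def Xg {X : Type*} (x : X) : FreeStarAlg X :=
  MonoidAlgebra.of ℂ (FreeMonoid X) (FreeMonoid.of x)

lemma starX {X : Type*} (x : X) : star (Xg x) = Xg x := by
  rw [Xg, star_of', FreeMonoid.star_of]

/-- the defining relations of the game algebra `𝒜(syncLCS(A,b))`: the generators are
self-adjoint (automatic here) idempotents, for each row the generators sum to one, and
incompatible pairs are orthogonal. -/
inductive SyncRel [NeZero p] (A : Matrix (Fin m) (Fin n) (ZMod p)) (b : Fin m → ZMod p) :
    FreeStarAlg (SyncGen A b) → FreeStarAlg (SyncGen A b) → Prop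
  | idem (g : SyncGen A b) : SyncRel A b (Xg g * Xg g) (Xg g)
  | sum_one (i : Fin m) :
      SyncRel A b (∑ x ∈ (Ssol A b i).attach, Xg (⟨i, x⟩ : SyncGen A b)) 1
  | orth {i k : Fin m} (x : {x // x ∈ Ssol A b i}) (y : {y // y ∈ Ssol A b k})
      (h : Incompat A i k x.1 y.1) :
      SyncRel A b (Xg (⟨i, x⟩ : SyncGen A b) * Xg (⟨k, y⟩ : SyncGen A b)) 0

lemma SyncRel.star_closed [NeZero p] (A : Matrix (Fin m) (Fin n) (ZMod p)) (b : Fin m → ZMod p) :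
    ∀ a c, SyncRel A b a c → SyncRel A b (star a) (star c) := by
  intro a c h
  cases h with
  | idem g => rw [star_mul, starX]; exact SyncRel.idem g
  | sum_one i =>
      rw [star_sum, star_one]
      simp only [starX]
      exact SyncRel.sum_one i
  | orth x y h =>
      rw [star_mul, starX, starX, star_zero]
      exact SyncRel.orth y x h.symm

/-- The game algebra `𝒜(syncLCS(A,b))`: the quotient of the free `*`-algebra on the
generators `a_{i,x}` by the `*`-ideal generated by the game relations. -/
abbrev GameAlg [NeZero p] (A : Matrix (Fin m) (Fin n) (ZMod p)) (b : Fin m → ZMod p) :=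
  RingQuot (SyncRel A b)

noncomputable instance [NeZero p] (A : Matrix (Fin m) (Fin n) (ZMod p)) (b : Fin m → ZMod p) :
    StarRing (GameAlg A b) :=
  RingQuot.starRing _ (SyncRel.star_closed A b)

/-- the generator `a_{i,x}` of the game algebra `𝒜(syncLCS(A,b))` -/
noncomputable def agen [NeZero p] (A : Matrix (Fin m) (Fin n) (ZMod p)) (b : Fin m → ZMod p)
    (i : Fin m) (x : Fin n → ZMod p) (hx : x ∈ Ssol A b i) : GameAlg A b :=
  RingQuot.mkAlgHom ℂ (SyncRel A b) (Xg ⟨i, ⟨x, hx⟩⟩)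

end GameAlgebra

section SolutionGroup

variable {p m n : ℕ}

open scoped commutatorElement

/-- the relators of the solution group `Γ(A,b)`; the generator `none` plays the role of `J`
and `some j` plays the role of `g_j`.  The relators are `g_j^p`, `J^p`, `[g_j, J]`,
`[g_j, g_ℓ]` for `j,ℓ ∈ V_i`, and `(∏_j g_j^{A_{i,j}})·J^{-b_i}`. -/
def solRels (p : ℕ) (A : Matrix (Fin m) (Fin n) (ZMod p)) (b : Fin m → ZMod p) :
    Set (FreeGroup (Option (Fin n))) :=
  { w | (∃ j : Fin n, w = FreeGroup.of (some j) ^ p)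
    ∨ w = FreeGroup.of (none : Option (Fin n)) ^ p
    ∨ (∃ j : Fin n, w = ⁅FreeGroup.of (some j), FreeGroup.of (none : Option (Fin n))⁆)
    ∨ (∃ i : Fin m, ∃ j l : Fin n, j ∈ Vset A i ∧ l ∈ Vset A i ∧
        w = ⁅FreeGroup.of (some j), FreeGroup.of (some l)⁆)
    ∨ (∃ i : Fin m,
        w = ((List.finRange n).map fun j => FreeGroup.of (some j) ^ ((A i j).val)).prod *
          FreeGroup.of (none : Option (Fin n)) ^ (-(((b i).val : ℤ)))) }

/-- the solution group `Γ(A,b)` -/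
abbrev SolutionGroup (p : ℕ) (A : Matrix (Fin m) (Fin n) (ZMod p)) (b : Fin m → ZMod p) :=
  PresentedGroup (solRels p A b)

/-- the generator `g_j` of the solution group -/
def gj {p : ℕ} {A : Matrix (Fin m) (Fin n) (ZMod p)} {b : Fin m → ZMod p} (j : Fin n) :
    SolutionGroup p A b := PresentedGroup.of (some j)

/-- the central generator `J` of the solution group -/
def Jgen {p : ℕ} {A : Matrix (Fin m) (Fin n) (ZMod p)} {b : Fin m → ZMod p} :
    SolutionGroup p A b := PresentedGroup.of none

/-- `J` as an element of the group `*`-algebra `ℂΓ(A,b)` -/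
noncomputable def Jga (p : ℕ) (A : Matrix (Fin m) (Fin n) (ZMod p)) (b : Fin m → ZMod p) :
    MonoidAlgebra ℂ (SolutionGroup p A b) :=
  MonoidAlgebra.of ℂ _ Jgen

/-- the relation generating the two-sided `*`-ideal `⟨J - ω·1⟩` of `ℂΓ(A,b)` -/
inductive QuotRel (ω : ℂ) (p : ℕ) (A : Matrix (Fin m) (Fin n) (ZMod p)) (b : Fin m → ZMod p) :
    MonoidAlgebra ℂ (SolutionGroup p A b) → MonoidAlgebra ℂ (SolutionGroup p A b) → Prop
  | base : QuotRel ω p A b (Jga p A b - algebraMap ℂ _ ω) 0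
  | star_base : QuotRel ω p A b (star (Jga p A b - algebraMap ℂ _ ω)) 0

/-- the quotient `*`-algebra `ℂΓ(A,b)/⟨J-ω·1⟩` -/
abbrev SolQuot (ω : ℂ) (p : ℕ) (A : Matrix (Fin m) (Fin n) (ZMod p)) (b : Fin m → ZMod p) :=
  RingQuot (QuotRel ω p A b)

noncomputable instance (ω : ℂ) (p : ℕ) (A : Matrix (Fin m) (Fin n) (ZMod p))
    (b : Fin m → ZMod p) : StarRing (SolQuot ω p A b) := by
  refine RingQuot.starRing _ ?_
  intro a c h
  cases h with
  | base => rw [star_zero]; exact QuotRel.star_base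
  | star_base => rw [star_zero, star_star]; exact QuotRel.base

end SolutionGroup

/-! For each row `i`, the generators `a_{i,x}` (`x ∈ S_i`) form a complete family of orthogonal
self-adjoint idempotents, so `c ↦ ∑_x c(x) a_{i,x}` is a unital `*`-homomorphism from the
functions on `S_i` into the game algebra. Send `g_j` to the image of the phase `x ↦ ω^{x_j}`: it
does not depend on the row containing `j`, because incompatible projections are orthogonal. The
relations of `Γ(A,b)` then reduce to pointwise identities of functions on `S_i`, the last one
being `∏_j ω^{A_{ij} x_j} = ω^{b_i}` for a solution `x` of row `i`. All images are unitary, so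
we get a representation of `Γ(A,b)` in the unitary group, which extends to `ℂΓ(A,b)`; it sends
`J` to `ω`, hence kills `J - ω·1` and factors through the quotient. -/

namespace CompleteOrthogonalIdempotents

variable {K R ι : Type*} [CommSemiring K] [Semiring R] [Algebra K R] [Fintype ι] {e : ι → R}

def piAlgHom (he : CompleteOrthogonalIdempotents e) : (ι → K) →ₐ[K] R :=
  AlgHom.ofLinearMap (Fintype.linearCombination K e)
    (by simp [Fintype.linearCombination_apply, he.complete])
    (fun c d => by
      classical
      simp only [Fintype.linearCombination_apply, Pi.mul_apply, Finset.sum_mul_sum,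
        smul_mul_smul_comm, he.mul_eq, smul_ite, smul_zero, Finset.sum_ite_eq, Finset.mem_univ,
        if_true, mul_smul])

theorem piAlgHom_apply (he : CompleteOrthogonalIdempotents e) (c : ι → K) :
    he.piAlgHom c = ∑ i, c i • e i :=
  Fintype.linearCombination_apply K e c

variable [StarRing K] [StarRing R] [StarModule K R]

def piStarAlgHom (he : CompleteOrthogonalIdempotents e) (hsa : ∀ i, IsSelfAdjoint (e i)) :
    (ι → K) →⋆ₐ[K] R where
  toAlgHom := he.piAlgHom
  map_star' c := by
    simp only [AlgHom.toFun_eq_coe, piAlgHom_apply, star_sum, star_smul, (hsa _).star_eq,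
      Pi.star_apply]

theorem piStarAlgHom_apply (he : CompleteOrthogonalIdempotents e)
    (hsa : ∀ i, IsSelfAdjoint (e i)) (c : ι → K) :
    he.piStarAlgHom hsa c = ∑ i, c i • e i :=
  piAlgHom_apply he c

end CompleteOrthogonalIdempotents

instance {M : Type*} [Monoid M] [StarMul M] : StarModule ℂ (MonoidAlgebra ℂ M) where
  star_smul c f := by
    ext x
    exact map_mul (starRingEnd ℂ) c (f.coeff (star x))

section GameAlgebra

variable {p m n : ℕ} [NeZero p] (A : Matrix (Fin m) (Fin n) (ZMod p)) (b : Fin m → ZMod p)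

theorem GameAlg.star_mk (x : FreeStarAlg (SyncGen A b)) :
    star (RingQuot.mkAlgHom ℂ (SyncRel A b) x) = RingQuot.mkAlgHom ℂ (SyncRel A b) (star x) := by
  simp only [RingQuot.mkAlgHom_def, AlgHom.coe_mk, RingQuot.mkRingHom_def]
  rfl

instance : StarModule ℂ (GameAlg A b) where
  star_smul c y := by
    obtain ⟨x, rfl⟩ := RingQuot.mkAlgHom_surjective ℂ (SyncRel A b) y
    rw [← map_smul, GameAlg.star_mk, GameAlg.star_mk, star_smul, map_smul]

theorem isSelfAdjoint_agen (i : Fin m) (x : Fin n → ZMod p) (hx : x ∈ Ssol A b i) :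
    IsSelfAdjoint (agen A b i x hx) := by
  rw [IsSelfAdjoint, agen, GameAlg.star_mk, starX]

theorem incompat_self_of_ne {i : Fin m} {x y : Fin n → ZMod p} (hx : x ∈ Ssol A b i)
    (hy : y ∈ Ssol A b i) (hne : x ≠ y) : Incompat A i i x y := by
  obtain ⟨j, hj⟩ := Function.ne_iff.mp hne
  have hjV : j ∈ Vset A i := by
    by_cases h0 : x j = 0
    · exact (Finset.mem_filter.mp hy).2.2 j fun h1 => hj (by rw [h0, h1])
    · exact (Finset.mem_filter.mp hx).2.2 j h0
  exact ⟨j, Finset.mem_inter.mpr ⟨hjV, hjV⟩, hj⟩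

theorem agen_mul_agen_of_incompat {i k : Fin m} {x y : Fin n → ZMod p} (hx : x ∈ Ssol A b i)
    (hy : y ∈ Ssol A b k) (h : Incompat A i k x y) :
    agen A b i x hx * agen A b k y hy = 0 := by
  rw [agen, agen, ← map_mul, RingQuot.mkAlgHom_rel ℂ (SyncRel.orth ⟨x, hx⟩ ⟨y, hy⟩ h), map_zero]

theorem completeOrthogonalIdempotents_agen (i : Fin m) :
    CompleteOrthogonalIdempotents fun x : Ssol A b i => agen A b i x.1 x.2 where
  idem x := by
    rw [IsIdempotentElem, agen, ← map_mul]
    exact RingQuot.mkAlgHom_rel ℂ (SyncRel.idem _)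
  ortho x y hne := agen_mul_agen_of_incompat A b x.2 y.2
    (incompat_self_of_ne A b x.2 y.2 (Subtype.val_injective.ne hne))
  complete := by
    have h := RingQuot.mkAlgHom_rel ℂ (SyncRel.sum_one (A := A) (b := b) i)
    rwa [map_sum, map_one] at h

def rowHom (i : Fin m) : (Ssol A b i → ℂ) →⋆ₐ[ℂ] GameAlg A b :=
  (completeOrthogonalIdempotents_agen A b i).piStarAlgHom fun x => isSelfAdjoint_agen A b i x.1 x.2

theorem rowHom_apply (i : Fin m) (c : Ssol A b i → ℂ) :
    rowHom A b i c = ∑ x ∈ (Ssol A b i).attach, c x • agen A b i x.1 x.2 :=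
  CompleteOrthogonalIdempotents.piStarAlgHom_apply _ _ c

end GameAlgebra

section Observables

variable {p m n : ℕ} [NeZero p] (A : Matrix (Fin m) (Fin n) (ZMod p)) (b : Fin m → ZMod p)

theorem rowHom_eval_eq_of_mem {i k : Fin m} {j : Fin n} (hi : j ∈ Vset A i) (hk : j ∈ Vset A k)
    (f : ZMod p → ℂ) :
    rowHom A b i (fun x => f (x.1 j)) = rowHom A b k (fun y => f (y.1 j)) := by
  calc rowHom A b i (fun x => f (x.1 j))
      = rowHom A b i (fun x => f (x.1 j)) * rowHom A b k 1 := by rw [map_one, mul_one]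
    _ = rowHom A b i 1 * rowHom A b k (fun y => f (y.1 j)) := by
      simp only [rowHom_apply, Finset.sum_mul_sum, Pi.one_apply, one_smul, smul_mul_assoc,
        mul_smul_comm]
      refine Finset.sum_congr rfl fun x _ => Finset.sum_congr rfl fun y _ => ?_
      by_cases h : Incompat A i k x.1 y.1
      · rw [agen_mul_agen_of_incompat A b x.2 y.2 h, smul_zero, smul_zero]
      · rw [not_not.mp fun hne => h ⟨j, Finset.mem_inter.mpr ⟨hi, hk⟩, hne⟩]
    _ = rowHom A b k (fun y => f (y.1 j)) := by rw [map_one, one_mul]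

def gjImage (ω : ℂ) (j : Fin n) : GameAlg A b :=
  if h : ∃ i, j ∈ Vset A i then rowHom A b h.choose (fun x => ω ^ (x.1 j).val) else 1

theorem gjImage_eq {ω : ℂ} {j : Fin n} {i : Fin m} (hi : j ∈ Vset A i) :
    gjImage A b ω j = rowHom A b i (fun x => ω ^ (x.1 j).val) := by
  have h : ∃ i, j ∈ Vset A i := ⟨i, hi⟩
  rw [gjImage, dif_pos h]
  exact rowHom_eval_eq_of_mem A b h.choose_spec hi fun v => ω ^ v.val

theorem gjImage_mem_unitary {ω : ℂ} (hω : ω ∈ unitary ℂ) (j : Fin n) :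
    gjImage A b ω j ∈ unitary (GameAlg A b) := by
  unfold gjImage
  split_ifs with h
  · refine Unitary.map_mem _ (Unitary.mem_iff_star_mul_self.mpr (funext fun x => ?_))
    exact Unitary.star_mul_self_of_mem (pow_mem hω _)
  · exact one_mem _

theorem gjImage_pow_eq_one {ω : ℂ} (hω : ω ^ p = 1) (j : Fin n) : gjImage A b ω j ^ p = 1 := by
  unfold gjImage
  split_ifs with h
  · rw [← map_pow, ← map_one (rowHom A b h.choose)]
    congr 1
    funext x
    rw [Pi.pow_apply, ← pow_mul, mul_comm, pow_mul, hω, one_pow, Pi.one_apply]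
  · exact one_pow p

theorem gjImage_pow_entry (ω : ℂ) (i : Fin m) (j : Fin n) :
    gjImage A b ω j ^ (A i j).val = rowHom A b i (fun x => ω ^ ((x.1 j).val * (A i j).val)) := by
  by_cases hj : j ∈ Vset A i
  · rw [gjImage_eq A b hj, ← map_pow]
    simp only [pow_mul]
    rfl
  · have hA : A i j = 0 := by simpa [Vset] using hj
    simp only [hA, ZMod.val_zero, pow_zero, mul_zero]
    exact (map_one _).symm

theorem prod_gjImage_pow_entry {ω : ℂ} (hω : ω ^ p = 1) (i : Fin m) :
    ((List.finRange n).map fun j => gjImage A b ω j ^ (A i j).val).prod =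
      algebraMap ℂ (GameAlg A b) (ω ^ (b i).val) := by
  have hrow : ∀ x : Ssol A b i, ∏ j, ω ^ ((x.1 j).val * (A i j).val) = ω ^ (b i).val := by
    intro x
    rw [Finset.prod_pow_eq_pow_sum,
      (isOfFinOrder_iff_pow_eq_one.mpr ⟨p, Nat.pos_of_neZero p, hω⟩).pow_eq_pow_iff_modEq]
    refine Nat.ModEq.of_dvd (orderOf_dvd_of_pow_eq_one hω) ?_
    rw [← ZMod.natCast_eq_natCast_iff, ← (Finset.mem_filter.mp x.2).2.1]
    push_cast [ZMod.natCast_val, ZMod.cast_id]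
    exact Finset.sum_congr rfl fun j _ => mul_comm _ _
  calc ((List.finRange n).map fun j => gjImage A b ω j ^ (A i j).val).prod
      = rowHom A b i (∏ j, fun x : Ssol A b i => ω ^ ((x.1 j).val * (A i j).val)) := by
        rw [Fin.prod_univ_def, map_list_prod, List.map_map]
        simp only [Function.comp_def, gjImage_pow_entry]
    _ = rowHom A b i (algebraMap ℂ _ (ω ^ (b i).val)) :=
        congrArg (rowHom A b i) (funext fun x => by rw [Finset.prod_apply, hrow]; rfl)
    _ = algebraMap ℂ (GameAlg A b) (ω ^ (b i).val) := (rowHom A b i).commutes _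

end Observables

namespace SolutionGroup

variable {p m n : ℕ} {A : Matrix (Fin m) (Fin n) (ZMod p)} {b : Fin m → ZMod p}
  {G : Type*} [Group G] {g : Fin n → G} {J : G}

open scoped commutatorElement in
theorem lift_solRels_eq_one (hg : ∀ j, g j ^ p = 1) (hJ : J ^ p = 1)
    (hgJ : ∀ j, Commute (g j) J)
    (hgg : ∀ i, ∀ j ∈ Vset A i, ∀ l ∈ Vset A i, Commute (g j) (g l))
    (hrow : ∀ i, ((List.finRange n).map fun j => g j ^ (A i j).val).prod = J ^ (b i).val) :
    ∀ r ∈ solRels p A b, FreeGroup.lift (fun o => o.elim J g) r = 1 := by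
  rintro r (⟨j, rfl⟩ | rfl | ⟨j, rfl⟩ | ⟨i, j, l, hj, hl, rfl⟩ | ⟨i, rfl⟩)
  · simpa using hg j
  · simpa using hJ
  · simpa [commutatorElement_eq_one_iff_commute] using hgJ j
  · simpa [commutatorElement_eq_one_iff_commute] using hgg i j hj l hl
  · simpa [map_list_prod, Function.comp_def, mul_inv_eq_one] using hrow i

variable (g J)

def lift (hg : ∀ j, g j ^ p = 1) (hJ : J ^ p = 1) (hgJ : ∀ j, Commute (g j) J)
    (hgg : ∀ i, ∀ j ∈ Vset A i, ∀ l ∈ Vset A i, Commute (g j) (g l))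
    (hrow : ∀ i, ((List.finRange n).map fun j => g j ^ (A i j).val).prod = J ^ (b i).val) :
    SolutionGroup p A b →* G :=
  PresentedGroup.toGroup (lift_solRels_eq_one hg hJ hgJ hgg hrow)

variable {g J} {hg : ∀ j, g j ^ p = 1} {hJ : J ^ p = 1} {hgJ : ∀ j, Commute (g j) J}
  {hgg : ∀ i, ∀ j ∈ Vset A i, ∀ l ∈ Vset A i, Commute (g j) (g l)}
  {hrow : ∀ i, ((List.finRange n).map fun j => g j ^ (A i j).val).prod = J ^ (b i).val}

theorem lift_gj (j : Fin n) : lift g J hg hJ hgJ hgg hrow (gj j) = g j :=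
  PresentedGroup.toGroup.of _

theorem lift_Jgen : lift g J hg hJ hgJ hgg hrow Jgen = J :=
  PresentedGroup.toGroup.of _

end SolutionGroup

namespace MonoidAlgebra

variable {G R : Type*} [Group G] [Ring R] [StarRing R] [Algebra ℂ R] [StarModule ℂ R]

def liftUnitary (Ψ : G →* unitary R) : MonoidAlgebra ℂ G →⋆ₐ[ℂ] R where
  toAlgHom := lift ℂ R G ((unitary R).subtype.comp Ψ)
  map_star' f := by
    change lift ℂ R G _ (star f) = star (lift ℂ R G _ f)
    induction f using induction_linear with
    | zero => simp only [star_zero, map_zero]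
    | add f g hf hg => simp only [star_add, map_add, hf, hg]
    | single g c =>
      change lift ℂ R G _ (mstar (single g c)) = _
      rw [mstar_single, lift_single, lift_single, star_smul, star_grp, MonoidHom.comp_apply,
        MonoidHom.comp_apply, map_inv, ← Unitary.star_eq_inv]
      rfl

theorem liftUnitary_of (Ψ : G →* unitary R) (g : G) : liftUnitary Ψ (of ℂ G g) = Ψ g :=
  lift_of _ g

end MonoidAlgebra

section Representation

variable {p m n : ℕ} [NeZero p] (A : Matrix (Fin m) (Fin n) (ZMod p)) (b : Fin m → ZMod p)
  {ω : ℂ}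

theorem Complex.mem_unitary_of_pow_eq_one {z : ℂ} {k : ℕ} (hz : z ^ k = 1) (hk : k ≠ 0) :
    z ∈ unitary ℂ := by
  rw [Unitary.mem_iff_star_mul_self, Complex.star_def, Complex.conj_mul',
    Complex.norm_eq_one_of_pow_eq_one hz hk]
  norm_num

def gameRep (hω : ω ^ p = 1) : SolutionGroup p A b →* unitary (GameAlg A b) :=
  SolutionGroup.lift
    (fun j => ⟨gjImage A b ω j,
      gjImage_mem_unitary A b (Complex.mem_unitary_of_pow_eq_one hω (NeZero.ne p)) j⟩)
    ⟨algebraMap ℂ _ ω, by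
      simpa using Unitary.map_mem (StarAlgHom.ofId ℂ (GameAlg A b))
        (Complex.mem_unitary_of_pow_eq_one hω (NeZero.ne p))⟩
    (fun j => Subtype.ext (gjImage_pow_eq_one A b hω j))
    (Subtype.ext (by simp [← map_pow, hω]))
    (fun j => Subtype.ext (Algebra.commutes ω _).symm)
    (fun i j hj l hl => Subtype.ext (by
      simp only [Submonoid.coe_mul, gjImage_eq A b hj, gjImage_eq A b hl, ← map_mul, mul_comm]))
    (fun i => Subtype.ext (by
      simpa [Function.comp_def, map_pow] using prod_gjImage_pow_entry A b hω i))

theorem gameRep_gj (hω : ω ^ p = 1) (j : Fin n) :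
    (gameRep A b hω (gj j) : GameAlg A b) = gjImage A b ω j :=
  congrArg Subtype.val (SolutionGroup.lift_gj j)

theorem gameRep_Jgen (hω : ω ^ p = 1) :
    (gameRep A b hω Jgen : GameAlg A b) = algebraMap ℂ _ ω :=
  congrArg Subtype.val SolutionGroup.lift_Jgen

end Representation

namespace SolQuot

variable {p m n : ℕ} {A : Matrix (Fin m) (Fin n) (ZMod p)} {b : Fin m → ZMod p} {ω : ℂ}
  {R : Type*} [Ring R] [StarRing R] [Algebra ℂ R]

theorem star_mk (x : MonoidAlgebra ℂ (SolutionGroup p A b)) :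
    star (RingQuot.mkAlgHom ℂ (QuotRel ω p A b) x) =
      RingQuot.mkAlgHom ℂ (QuotRel ω p A b) (star x) := by
  simp only [RingQuot.mkAlgHom_def, AlgHom.coe_mk, RingQuot.mkRingHom_def]
  rfl

theorem map_eq_of_quotRel {φ : MonoidAlgebra ℂ (SolutionGroup p A b) →⋆ₐ[ℂ] R}
    (hφ : φ (Jga p A b) = algebraMap ℂ R ω) ⦃x y : MonoidAlgebra ℂ (SolutionGroup p A b)⦄
    (h : QuotRel ω p A b x y) : φ x = φ y := by
  have hker : φ (Jga p A b - algebraMap ℂ _ ω) = 0 := by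
    rw [map_sub, hφ, AlgHomClass.commutes, sub_self]
  cases h with
  | base => rw [hker, map_zero]
  | star_base => rw [map_star, hker, star_zero, map_zero]

def lift (φ : MonoidAlgebra ℂ (SolutionGroup p A b) →⋆ₐ[ℂ] R)
    (hφ : φ (Jga p A b) = algebraMap ℂ R ω) : SolQuot ω p A b →⋆ₐ[ℂ] R where
  toAlgHom := RingQuot.liftAlgHom ℂ ⟨φ.toAlgHom, map_eq_of_quotRel hφ⟩
  map_star' q := by
    obtain ⟨u, rfl⟩ := RingQuot.mkAlgHom_surjective ℂ (QuotRel ω p A b) q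
    simp only [AlgHom.toFun_eq_coe, star_mk, RingQuot.liftAlgHom_mkAlgHom_apply,
      StarAlgHom.coe_toAlgHom, map_star]

theorem lift_mk (φ : MonoidAlgebra ℂ (SolutionGroup p A b) →⋆ₐ[ℂ] R)
    (hφ : φ (Jga p A b) = algebraMap ℂ R ω) (u : MonoidAlgebra ℂ (SolutionGroup p A b)) :
    lift φ hφ (RingQuot.mkAlgHom ℂ (QuotRel ω p A b) u) = φ u :=
  RingQuot.liftAlgHom_mkAlgHom_apply ℂ φ.toAlgHom (map_eq_of_quotRel hφ) u

end SolQuot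

/-- There is a unital `*`-homomorphism `φ : ℂΓ(A,b) → 𝒜(syncLCS(A,b))`
with `φ(J) = ω·1` and `φ(g_j) = ∑_{x ∈ S_i} ω^{x_j} a_{i,x}` for any `i` with `j ∈ V_i`;
it descends to the quotient `ℂΓ(A,b)/⟨J-ω·1⟩`. -/
theorem statement4 (p : ℕ) [Fact p.Prime] {m n : ℕ} (ω : ℂ) (hω : IsPrimitiveRoot ω p)
    (A : Matrix (Fin m) (Fin n) (ZMod p)) (b : Fin m → ZMod p) :
    ∃ φ : MonoidAlgebra ℂ (SolutionGroup p A b) →⋆ₐ[ℂ] GameAlg A b,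
      φ (Jga p A b) = algebraMap ℂ (GameAlg A b) ω ∧
      (∀ (j : Fin n) (i : Fin m), j ∈ Vset A i →
        φ (MonoidAlgebra.of ℂ (SolutionGroup p A b) (gj j)) =
          ∑ x ∈ (Ssol A b i).attach, (ω ^ ((x.1 j).val) : ℂ) • agen A b i x.1 x.2) ∧
      ∃ φbar : SolQuot ω p A b →⋆ₐ[ℂ] GameAlg A b,
        ∀ u : MonoidAlgebra ℂ (SolutionGroup p A b),
          φbar (RingQuot.mkAlgHom ℂ (QuotRel ω p A b) u) = φ u := by
  let φ := MonoidAlgebra.liftUnitary (gameRep A b hω.pow_eq_one)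
  have hφJ : φ (Jga p A b) = algebraMap ℂ (GameAlg A b) ω := by
    rw [Jga, MonoidAlgebra.liftUnitary_of, gameRep_Jgen]
  refine ⟨φ, hφJ, fun j i hi => ?_, SolQuot.lift φ hφJ, SolQuot.lift_mk φ hφJ⟩
  rw [MonoidAlgebra.liftUnitary_of, gameRep_gj, gjImage_eq A b hi, rowHom_apply]
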